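/- (Proposition 5.1 for type A) Fix n ≥ 1 and a vertex x = (p,r) of ℤA_{n+1}. Then: (i) for every vertex y and every 1 ≤ k ≤ n, h'_k(y,x) ≥ 0 (hence h_k(y,x) = h'_k(y,x)); (ii) h_n(y,x) = 1 if y = (p+r−n, n−r) and h_n(y,x) = 0 otherwise; (iii) h_k(y,x) = 0 for every vertex y and every k > n. -/
import Mathlib


/-- Sum over the arrows `y → v` of `ℤA_{n+1}` of the value `f v`. The vertex set of
`ℤA_{n+1}` is `ℤ × {0,…,n}`, with arrows `(q,s) → (q,s+1)` for `s < n` and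
`(q,s) → (q+1,s-1)` for `0 < s`. -/
def stepA (n : ℕ) (f : ℤ × ℕ → ℕ) (y : ℤ × ℕ) : ℤ :=
  (if y.2 < n then (f (y.1, y.2 + 1) : ℤ) else 0) +
    (if 0 < y.2 then (f (y.1 + 1, y.2 - 1) : ℤ) else 0)

/-- `hA n x k y` is `h_k(y,x)` for `ℤA_{n+1}`: `h_0(y,x) = δ(y,x)` and, for `k > 0`,
`h_k(y,x) = max(h'_k(y,x), 0)` where
`h'_k(y,x) = ∑_{y → v} h_{k-1}(v,x) - h_{k-2}(τ⁻¹ y, x)` and `τ⁻¹(q,s) = (q+1,s)`. -/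
def hA (n : ℕ) (x : ℤ × ℕ) : ℕ → ℤ × ℕ → ℕ
  | 0 => fun y => if y = x then 1 else 0
  | 1 => fun y => (stepA n (hA n x 0) y).toNat
  | k + 2 => fun y =>
      (stepA n (hA n x (k + 1)) y - (hA n x k (y.1 + 1, y.2) : ℤ)).toNat

/-- `h'A n x k y` is `h'_k(y,x)` (meaningful for `k ≥ 1`):
`h'_k(y,x) = ∑_{y → v} h_{k-1}(v,x) - h_{k-2}(τ⁻¹ y, x) ∈ ℤ`. -/
def h'A (n : ℕ) (x : ℤ × ℕ) (k : ℕ) (y : ℤ × ℕ) : ℤ :=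
  stepA n (hA n x (k - 1)) y -
    (if 2 ≤ k then (hA n x (k - 2) (y.1 + 1, y.2) : ℤ) else 0)

/-- `hTotA n y x = h(y,x) = ∑_{k ≥ 0} h_k(y,x)` (a finite sum, via `finsum`). -/
noncomputable def hTotA (n : ℕ) (y x : ℤ × ℕ) : ℕ := ∑ᶠ k : ℕ, hA n x k y


def Hfun (n : ℕ) (p : ℤ) (r : ℕ) (k : ℕ) (y : ℤ × ℕ) : ℕ :=
  if (k : ℤ) + y.2 = r + 2 * (p - y.1) ∧ 0 ≤ p - y.1 ∧ p - y.1 ≤ (y.2 : ℤ) ∧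
      p - y.1 ≤ (k : ℤ) ∧ (y.2 : ℤ) + k - (p - y.1) ≤ n then 1 else 0

lemma key (n : ℕ) (p : ℤ) (r : ℕ) (hr : r ≤ n) (k : ℕ) (hk : 1 ≤ k)
    (hk2 : k ≠ n + 2) (q : ℤ) (s : ℕ) (hs : s ≤ n) :
    stepA n (Hfun n p r (k - 1)) (q, s) -
      (if 2 ≤ k then (Hfun n p r (k - 2) (q + 1, s) : ℤ) else 0) =
      Hfun n p r k (q, s) := by
  simp only [stepA, Hfun]
  push_cast [apply_ite (fun m : ℕ => (m : ℤ))]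
  split_ifs <;> omega

lemma Hfun_zero (n : ℕ) (p : ℤ) (r : ℕ) (k : ℕ) (hk : n < k) (y : ℤ × ℕ) :
    Hfun n p r k y = 0 := by
  unfold Hfun
  split_ifs with h
  · exfalso; omega
  · rfl

lemma stepA_congr {n : ℕ} {f g : ℤ × ℕ → ℕ} (y : ℤ × ℕ)
    (h1 : y.2 < n → f (y.1, y.2 + 1) = g (y.1, y.2 + 1))
    (h2 : 0 < y.2 → f (y.1 + 1, y.2 - 1) = g (y.1 + 1, y.2 - 1)) :
    stepA n f y = stepA n g y := by
  unfold stepA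
  split_ifs with ha hb hb <;> simp only [h1, h2, ha, hb]

lemma hA_eq (n : ℕ) (p : ℤ) (r : ℕ) (hn : 1 ≤ n) (hr : r ≤ n) :
    ∀ k (q : ℤ) (s : ℕ), s ≤ n → hA n (p, r) k (q, s) = Hfun n p r k (q, s)
  | 0, q, s, hs => by
      simp only [hA, Hfun, Prod.mk.injEq]
      split_ifs with h1 h2 <;> first | rfl | (exfalso; omega)
  | 1, q, s, hs => by
      have hstep : stepA n (hA n (p, r) 0) (q, s) = stepA n (Hfun n p r 0) (q, s) :=
        stepA_congr _ (fun h => hA_eq n p r hn hr 0 q (s + 1) (by omega))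
          (fun h => hA_eq n p r hn hr 0 (q + 1) (s - 1) (by omega))
      have h1 := key n p r hr 1 (by omega) (by omega) q s hs
      rw [if_neg (by omega), sub_zero] at h1
      show (stepA n (hA n (p, r) 0) (q, s)).toNat = _
      rw [hstep, h1, Int.toNat_natCast]
  | (k + 2), q, s, hs => by
      have hstep : stepA n (hA n (p, r) (k + 1)) (q, s) =
          stepA n (Hfun n p r (k + 1)) (q, s) :=
        stepA_congr _ (fun h => hA_eq n p r hn hr (k + 1) q (s + 1) (by omega))
          (fun h => hA_eq n p r hn hr (k + 1) (q + 1) (s - 1) (by omega))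
      have hsub := hA_eq n p r hn hr k (q + 1) s hs
      show (stepA n (hA n (p, r) (k + 1)) (q, s) - (hA n (p, r) k (q + 1, s) : ℤ)).toNat = _
      rw [hstep, hsub]
      by_cases hc : k + 2 = n + 2
      · have hz : stepA n (Hfun n p r (k + 1)) (q, s) = 0 := by
          unfold stepA
          rw [Hfun_zero n p r (k + 1) (by omega), Hfun_zero n p r (k + 1) (by omega)]
          simp
        rw [hz, Hfun_zero n p r (k + 2) (by omega)]
        simp
      · have h1 := key n p r hr (k + 2) (by omega) hc q s hs
        rw [if_pos (by omega)] at h1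
        have h2 : (k + 2 : ℕ) - 1 = k + 1 := rfl
        have h3 : (k + 2 : ℕ) - 2 = k := rfl
        rw [h2, h3] at h1
        rw [h1, Int.toNat_natCast]

/-- Proposition 5.1 for type `A`: for a vertex `x = (p,r)` of `ℤA_{n+1}`,
(i) `h'_k(y,x) ≥ 0` for all vertices `y` and `1 ≤ k ≤ n` (hence `h_k = h'_k` there);
(ii) `h_n(y,x) = 1` if `y = (p+r-n, n-r)` and `h_n(y,x) = 0` otherwise;
(iii) `h_k(y,x) = 0` for all vertices `y` and all `k > n`. -/
theorem h_vanishing_ZA (n : ℕ) (hn : 1 ≤ n) (p : ℤ) (r : ℕ) (hr : r ≤ n) :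
    (∀ (q : ℤ) (s : ℕ), s ≤ n → ∀ k : ℕ, 1 ≤ k → k ≤ n →
      0 ≤ h'A n (p, r) k (q, s) ∧
        (hA n (p, r) k (q, s) : ℤ) = h'A n (p, r) k (q, s)) ∧
      (∀ (q : ℤ) (s : ℕ), s ≤ n →
        hA n (p, r) n (q, s) =
          if (q, s) = (p + (r : ℤ) - (n : ℤ), n - r) then 1 else 0) ∧
      ∀ (q : ℤ) (s : ℕ), s ≤ n → ∀ k : ℕ, n < k → hA n (p, r) k (q, s) = 0 := by
  have hA_eq' := hA_eq n p r hn hr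
  have h'A_eq : ∀ (q : ℤ) (s : ℕ), s ≤ n → ∀ k : ℕ, 1 ≤ k → k ≤ n + 1 →
      h'A n (p, r) k (q, s) = Hfun n p r k (q, s) := by
    intro q s hs k hk1 hk2
    unfold h'A
    have hstep : stepA n (hA n (p, r) (k - 1)) (q, s) =
        stepA n (Hfun n p r (k - 1)) (q, s) :=
      stepA_congr _ (fun h => hA_eq' (k - 1) q (s + 1) (by omega))
        (fun h => hA_eq' (k - 1) (q + 1) (s - 1) (by omega))
    rw [hstep]
    have hsub : (if 2 ≤ k then (hA n (p, r) (k - 2) (q + 1, s) : ℤ) else 0) =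
        (if 2 ≤ k then (Hfun n p r (k - 2) (q + 1, s) : ℤ) else 0) := by
      split_ifs
      · rw [hA_eq' (k - 2) (q + 1) s hs]
      · rfl
    rw [hsub, key n p r hr k hk1 (by omega) q s hs]
  refine ⟨fun q s hs k hk1 hk2 => ?_, fun q s hs => ?_, fun q s hs k hk => ?_⟩
  · rw [h'A_eq q s hs k hk1 (by omega), hA_eq' k q s hs]
    exact ⟨Int.natCast_nonneg _, rfl⟩
  · rw [hA_eq' n q s hs]
    simp only [Hfun, Prod.mk.injEq]
    split_ifs <;> first | rfl | (exfalso; omega)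
  · rw [hA_eq' k q s hs, Hfun_zero n p r k hk]
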